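/- Let d ≥ 2 and T(x) = d·x mod 1 on 𝕋. Let X ⊂ 𝕋 be an infinite rotational proper subset with semiconjugacy Φ: X → [0,1] to rotation by irrational θ₀, and nodes 0 = t₀ < t₁ < ⋯ < t_ℓ = 1 as given by the images Φ(X ∩ I_k) of the intersections with the d-adic intervals. If ω ∈ [0,1] satisfies ω + nθ₀ ≢ t_i (mod 1) for all n ≥ 0 and all i, then Φ⁻¹(ω) is a singleton. -/

import Mathlib

open Set Filter MeasureTheory

noncomputable def rep (z : UnitAddCircle) : ℝ := (AddCircle.equivIco 1 0 z : ℝ)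

def MinimalOn (T : UnitAddCircle → UnitAddCircle) (X : Set UnitAddCircle) : Prop :=
  ∀ x ∈ X, ∀ y ∈ X, y ∈ closure {z : UnitAddCircle | ∃ n : ℕ, T^[n] x = z}

def PreservesCyclicOrder (T : UnitAddCircle → UnitAddCircle) (X : Set UnitAddCircle) : Prop :=
  ∀ p ∈ X, ∀ q ∈ X, ∀ r ∈ X,
    T p ≠ T q → T q ≠ T r → T r ≠ T p →
    sbtw p q r → sbtw (T p) (T q) (T r)

def IsRotational (T : UnitAddCircle → UnitAddCircle) (X : Set UnitAddCircle) : Prop :=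
  IsClosed X ∧ Set.MapsTo T X X ∧ MinimalOn T X ∧ PreservesCyclicOrder T X

/-!
If `x ≠ y` both lay in the fiber `Φ⁻¹(ω)`, then, since multiplication by `d ≥ 2` is expansive,
some iterates `Tⁿx`, `Tⁿy` would have different leading `d`-adic digits. Both `Φ(Tⁿx)` and
`Φ(Tⁿy)` are congruent to `ω + nθ₀` mod 1, and by monotonicity of `Φ` the node of the `d`-adic
interval of the smaller point lies between them. As they lie in `[0, 1]`, this forces `ω + nθ₀`
to be congruent to that node or to `0`, against the genericity of `ω`.
-/

lemma rep_coe (x : ℝ) : rep (x : UnitAddCircle) = Int.fract x := by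
  simp [rep, AddCircle.coe_equivIco_mk_apply]

lemma coe_rep (z : UnitAddCircle) : (rep z : UnitAddCircle) = z :=
  (AddCircle.equivIco 1 0).symm_apply_apply z

lemma rep_injective : Function.Injective rep :=
  Function.LeftInverse.injective coe_rep

lemma rep_mem_Ico (z : UnitAddCircle) : rep z ∈ Ico (0 : ℝ) 1 := by
  simpa [rep] using (AddCircle.equivIco 1 0 z).2

lemma rep_nonneg (z : UnitAddCircle) : 0 ≤ rep z :=
  (rep_mem_Ico z).1

lemma coe_eq_coe_of_mem_Icc {s t : ℝ} (hs : s ∈ Icc (0 : ℝ) 1) (ht : t ∈ Icc (0 : ℝ) 1)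
    (h : (s : UnitAddCircle) = t) : s = t ∨ (s : UnitAddCircle) = 0 := by
  have coe_one : ((1 : ℝ) : UnitAddCircle) = 0 := AddCircle.coe_period 1
  rcases hs.2.eq_or_lt with rfl | hs1
  · exact Or.inr coe_one
  rcases ht.2.eq_or_lt with rfl | ht1
  · exact Or.inr (h.trans coe_one)
  left
  exact (AddCircle.coe_eq_coe_iff_of_mem_Ico (a := 0) (by simpa using ⟨hs.1, hs1⟩)
    (by simpa using ⟨ht.1, ht1⟩)).1 h

lemma coe_apply_iterate {α : Type*} {T : α → α} {X : Set α} {Φ : α → ℝ} {θ : ℝ}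
    (hT : MapsTo T X X) (hsemi : ∀ x ∈ X, (Φ (T x) : UnitAddCircle) = (Φ x + θ : ℝ))
    {x : α} (hx : x ∈ X) (n : ℕ) :
    (Φ (T^[n] x) : UnitAddCircle) = (Φ x + n * θ : ℝ) := by
  induction n with
  | zero => simp
  | succ n ih =>
    rw [Function.iterate_succ_apply', hsemi _ (hT.iterate n hx), AddCircle.coe_add, ih,
      ← AddCircle.coe_add]
    push_cast
    ring_nf

/-- The index `k` of the `d`-adic interval `[k/d, (k+1)/d)` containing `rep z`. -/
noncomputable def digit (d : ℕ) (z : UnitAddCircle) : ℕ := ⌊d * rep z⌋₊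

section Digits

variable {d : ℕ}

lemma rep_nsmul (z : UnitAddCircle) : rep (d • z) = d * rep z - digit d z := by
  conv_lhs => rw [← coe_rep z, ← AddCircle.coe_nsmul, rep_coe, nsmul_eq_mul]
  rw [Int.fract, digit, natCast_floor_eq_intCast_floor
    (mul_nonneg d.cast_nonneg (rep_nonneg z))]

lemma digit_le_mul_rep (z : UnitAddCircle) : (digit d z : ℝ) ≤ d * rep z :=
  Nat.floor_le (mul_nonneg d.cast_nonneg (rep_nonneg z))

lemma mul_rep_lt_digit_add_one (z : UnitAddCircle) : d * rep z < digit d z + 1 :=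
  Nat.lt_floor_add_one _

lemma digit_lt (hd : 0 < d) (z : UnitAddCircle) : digit d z < d := by
  have hz := rep_mem_Ico z
  exact (Nat.floor_lt (mul_nonneg d.cast_nonneg hz.1)).2
    (mul_lt_of_lt_one_right (by exact_mod_cast hd) hz.2)

lemma rep_iterate_sub_rep_iterate {x y : UnitAddCircle}
    (hdig : ∀ n, digit d ((d • ·)^[n] x) = digit d ((d • ·)^[n] y)) (n : ℕ) :
    rep ((d • ·)^[n] x) - rep ((d • ·)^[n] y) = d ^ n * (rep x - rep y) := by
  induction n with
  | zero => simp
  | succ n ih =>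
    simp only [Function.iterate_succ_apply', rep_nsmul, hdig n]
    rw [pow_succ, mul_comm _ (d : ℝ), mul_assoc, ← ih]
    ring

lemma eq_of_forall_digit_iterate_eq (hd : 2 ≤ d) {x y : UnitAddCircle}
    (hdig : ∀ n, digit d ((d • ·)^[n] x) = digit d ((d • ·)^[n] y)) : x = y := by
  refine rep_injective (sub_eq_zero.1 (by_contra fun hne => ?_))
  obtain ⟨n, hn⟩ := pow_unbounded_of_one_lt (1 / |rep x - rep y|)
    (by exact_mod_cast hd : (1 : ℝ) < d)
  have hdist : |rep ((d • ·)^[n] x) - rep ((d • ·)^[n] y)| < 1 := by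
    have hx := rep_mem_Ico ((d • ·)^[n] x)
    have hy := rep_mem_Ico ((d • ·)^[n] y)
    rw [abs_sub_lt_iff]
    constructor <;> linarith [hx.1, hx.2, hy.1, hy.2]
  rw [rep_iterate_sub_rep_iterate hdig, abs_mul, abs_pow, Nat.abs_cast] at hdist
  rw [div_lt_iff₀ (abs_pos.2 hne)] at hn
  linarith

end Digits

/-- `X ∩ I_k` in the paper's notation. -/
def digitCell (d : ℕ) (X : Set UnitAddCircle) (k : ℕ) : Set UnitAddCircle :=
  {x ∈ X | rep x ∈ Icc ((k : ℝ) / d) (((k : ℝ) + 1) / d)}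

/-- The nodes `t_i` of the paper. -/
def nodes (d : ℕ) (X : Set UnitAddCircle) (Φ : UnitAddCircle → ℝ) : Set ℝ :=
  {0} ∪ ⋃ k : Fin d, {r : ℝ | (digitCell d X k).Nonempty ∧ r = sSup (Φ '' digitCell d X k)}

section Nodes

variable {d : ℕ} {X : Set UnitAddCircle} {Φ : UnitAddCircle → ℝ}

lemma mem_digitCell_digit (hd : 0 < d) {u : UnitAddCircle} (hu : u ∈ X) :
    u ∈ digitCell d X (digit d u) := by
  have hd' : (0 : ℝ) < d := by exact_mod_cast hd
  refine ⟨hu, ?_, ?_⟩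
  · rw [div_le_iff₀ hd', mul_comm]
    exact digit_le_mul_rep u
  · rw [le_div_iff₀ hd', mul_comm]
    exact (mul_rep_lt_digit_add_one u).le

lemma add_one_div_le_rep_of_lt_digit (hd : 0 < d) {k : ℕ} {v : UnitAddCircle}
    (hk : k < digit d v) : ((k : ℝ) + 1) / d ≤ rep v := by
  rw [div_le_iff₀ (by exact_mod_cast hd), mul_comm]
  exact le_trans (by exact_mod_cast hk) (digit_le_mul_rep v)

lemma apply_le_sSup_le_apply (hd : 0 < d)
    (hmono : ∀ x ∈ X, ∀ y ∈ X, rep x ≤ rep y → Φ x ≤ Φ y) (hbdd : BddAbove (Φ '' X))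
    {u v : UnitAddCircle} (hu : u ∈ X) (hv : v ∈ X) (huv : digit d u < digit d v) :
    Φ u ≤ sSup (Φ '' digitCell d X (digit d u)) ∧
      sSup (Φ '' digitCell d X (digit d u)) ≤ Φ v := by
  have hu' := mem_digitCell_digit hd hu
  refine ⟨le_csSup (hbdd.mono (image_mono fun z hz => hz.1)) ⟨u, hu', rfl⟩, ?_⟩
  refine csSup_le ⟨Φ u, u, hu', rfl⟩ ?_
  rintro _ ⟨z, hz, rfl⟩
  exact hmono z hz.1 v hv (hz.2.2.trans (add_one_div_le_rep_of_lt_digit hd huv))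

lemma not_digit_lt_of_coe_apply_eq (hd : 0 < d)
    (hmono : ∀ x ∈ X, ∀ y ∈ X, rep x ≤ rep y → Φ x ≤ Φ y) (hΦ : MapsTo Φ X (Icc 0 1))
    {u v : UnitAddCircle} (hu : u ∈ X) (hv : v ∈ X) (huv : (Φ u : UnitAddCircle) = Φ v)
    (hgen : ∀ r ∈ nodes d X Φ, (Φ u : UnitAddCircle) ≠ r) : ¬ digit d u < digit d v := by
  intro hlt
  obtain ⟨hle, hge⟩ := apply_le_sSup_le_apply hd hmono
    ((bddAbove_Icc (a := (0 : ℝ)) (b := 1)).mono hΦ.image_subset) hu hv hlt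
  rcases coe_eq_coe_of_mem_Icc (hΦ hu) (hΦ hv) huv with heq | hzero
  · refine hgen _ (Or.inr (mem_iUnion.2 ⟨⟨digit d u, digit_lt hd u⟩, ?_⟩)) rfl
    exact ⟨⟨u, mem_digitCell_digit hd hu⟩, le_antisymm hle (heq ▸ hge)⟩
  · exact hgen 0 (Or.inl rfl) (by simpa using hzero)

lemma digit_eq_of_coe_apply_eq (hd : 0 < d)
    (hmono : ∀ x ∈ X, ∀ y ∈ X, rep x ≤ rep y → Φ x ≤ Φ y) (hΦ : MapsTo Φ X (Icc 0 1))
    {u v : UnitAddCircle} (hu : u ∈ X) (hv : v ∈ X) (huv : (Φ u : UnitAddCircle) = Φ v)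
    (hgen : ∀ r ∈ nodes d X Φ, (Φ u : UnitAddCircle) ≠ r) : digit d u = digit d v :=
  le_antisymm (not_lt.1 (not_digit_lt_of_coe_apply_eq hd hmono hΦ hv hu huv.symm (huv ▸ hgen)))
    (not_lt.1 (not_digit_lt_of_coe_apply_eq hd hmono hΦ hu hv huv hgen))

end Nodes

theorem generic_fiber_singleton_general
    (d : ℕ) (hd : 2 ≤ d)
    (T : UnitAddCircle → UnitAddCircle) (hTdef : ∀ x : UnitAddCircle, T x = d • x)
    (X : Set UnitAddCircle) (hrot : IsRotational T X)
    (θ₀ : ℝ)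
    (Φ : UnitAddCircle → ℝ)
    (hΦmono : ∀ x ∈ X, ∀ y ∈ X, rep x ≤ rep y → Φ x ≤ Φ y)
    (hΦsurj : Φ '' X = Set.Icc (0:ℝ) 1)
    (hsemi : ∀ x ∈ X,
      ((Φ (T x) : ℝ) : UnitAddCircle) = ((Φ x + θ₀ : ℝ) : UnitAddCircle))
    (N : Set ℝ)
    (hN : N = {0} ∪ ⋃ k : Fin d, {r : ℝ |
        ({x ∈ X | rep x ∈ Set.Icc ((k : ℝ) / d) (((k : ℝ) + 1) / d)}).Nonempty ∧
        r = sSup (Φ '' {x ∈ X | rep x ∈ Set.Icc ((k : ℝ) / d) (((k : ℝ) + 1) / d)})})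
    (ω : ℝ) (hω : ω ∈ Set.Icc (0:ℝ) 1)
    (hωgen : ∀ n : ℕ, ∀ r ∈ N,
      ((ω + n * θ₀ : ℝ) : UnitAddCircle) ≠ ((r : ℝ) : UnitAddCircle)) :
    ∃ a : UnitAddCircle, {x ∈ X | Φ x = ω} = {a} := by
  obtain rfl : T = (d • ·) := funext hTdef
  change N = nodes d X Φ at hN
  subst hN
  have hT : MapsTo (d • ·) X X := hrot.2.1
  have hΦ : MapsTo Φ X (Icc 0 1) := hΦsurj ▸ mapsTo_image Φ X
  obtain ⟨a, ha, rfl⟩ : ω ∈ Φ '' X := hΦsurj ▸ hω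
  refine ⟨a, eq_singleton_iff_unique_mem.2 ⟨⟨ha, rfl⟩, fun x ⟨hx, hxa⟩ => ?_⟩⟩
  refine eq_of_forall_digit_iterate_eq hd fun n => ?_
  have hxn : (Φ ((d • ·)^[n] x) : UnitAddCircle) = (Φ a + n * θ₀ : ℝ) :=
    hxa ▸ coe_apply_iterate hT hsemi hx n
  refine digit_eq_of_coe_apply_eq (by omega) hΦmono hΦ (hT.iterate n hx) (hT.iterate n ha)
    (hxn.trans (coe_apply_iterate hT hsemi ha n).symm) ?_
  rw [hxn]
  exact hωgen n

theorem generic_fiber_singleton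
    (d : ℕ) (hd : 2 ≤ d)
    (T : UnitAddCircle → UnitAddCircle) (hTdef : ∀ x : UnitAddCircle, T x = d • x)
    (X : Set UnitAddCircle) (hrot : IsRotational T X)
    (hinf : X.Infinite) (hproper : X ≠ Set.univ)
    (θ₀ : ℝ) (hθ : Irrational θ₀)
    (Φ : UnitAddCircle → ℝ)
    (hΦmono : ∀ x ∈ X, ∀ y ∈ X, rep x ≤ rep y → Φ x ≤ Φ y)
    (hΦcont : ContinuousOn Φ X)
    (hΦsurj : Φ '' X = Set.Icc (0:ℝ) 1)
    (hsemi : ∀ x ∈ X,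
      ((Φ (T x) : ℝ) : UnitAddCircle) = ((Φ x + θ₀ : ℝ) : UnitAddCircle))
    (N : Set ℝ)
    (hN : N = {0} ∪ ⋃ k : Fin d, {r : ℝ |
        ({x ∈ X | rep x ∈ Set.Icc ((k : ℝ) / d) (((k : ℝ) + 1) / d)}).Nonempty ∧
        r = sSup (Φ '' {x ∈ X | rep x ∈ Set.Icc ((k : ℝ) / d) (((k : ℝ) + 1) / d)})})
    (ω : ℝ) (hω : ω ∈ Set.Icc (0:ℝ) 1)
    (hωgen : ∀ n : ℕ, ∀ r ∈ N,
      ((ω + n * θ₀ : ℝ) : UnitAddCircle) ≠ ((r : ℝ) : UnitAddCircle)) :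
    ∃ a : UnitAddCircle, {x ∈ X | Φ x = ω} = {a} :=
  generic_fiber_singleton_general d hd T hTdef X hrot θ₀ Φ hΦmono hΦsurj hsemi N hN ω hω hωgen
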